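/- arXiv:2001.01111 — 4 statements merged into one kernel-verified Lean document; each statement's English description precedes it below -/
import Mathlib

section
/- Let p, q, r, μ be real numbers with 0 < q < p, 0 < r < 2, r·p < 2·q, and μ > 0. Then there exists a constant C > 0, depending only on p, q, r and μ, such that for all real numbers a ≥ 0 and b ≥ 0 one has a^q · b^r ≤ μ⁻¹ · a^p · b² + C · (a^p + 1). -/
/-!
Write `a ^ q * b ^ r = (a ^ (p r / 2) * b ^ r) * a ^ (q - p r / 2)` and apply Young's inequality with
exponents `2 / r`, `2 / (2 - r)` and weight `μ⁻¹` on the first factor. The first term becomes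
`μ⁻¹ * a ^ p * b ^ 2`, the second a constant times `a ^ t` with `t = (2 q - r p) / (2 - r)`, and
`0 ≤ t ≤ p` (from `r p < 2 q` and `q < p`) gives `a ^ t ≤ a ^ p + 1`.
-/

namespace Real

theorem young_inequality_eps_of_nonneg {x y s s' ε : ℝ} (hx : 0 ≤ x) (hy : 0 ≤ y)
    (hss' : s.HolderConjugate s') (hε : 0 < ε) :
    x * y ≤ ε * x ^ s + ε ^ (-(s' / s)) * y ^ s' := by
  have hs := hss'.pos
  have hu : (ε ^ s⁻¹ * x) ^ s = ε * x ^ s := by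
    rw [mul_rpow (by positivity) hx, ← rpow_mul hε.le, inv_mul_cancel₀ hs.ne', rpow_one]
  have hv : (ε ^ (-s⁻¹) * y) ^ s' = ε ^ (-(s' / s)) * y ^ s' := by
    rw [mul_rpow (by positivity) hy, ← rpow_mul hε.le, neg_mul, inv_mul_eq_div]
  have hyoung := young_inequality_of_nonneg (a := ε ^ s⁻¹ * x) (b := ε ^ (-s⁻¹) * y)
    (by positivity) (by positivity) hss'
  rw [hu, hv] at hyoung
  calc x * y = (ε ^ s⁻¹ * x) * (ε ^ (-s⁻¹) * y) := by
        rw [rpow_neg hε.le]; field_simp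
    _ ≤ ε * x ^ s / s + ε ^ (-(s' / s)) * y ^ s' / s' := hyoung
    _ ≤ ε * x ^ s + ε ^ (-(s' / s)) * y ^ s' := by
        gcongr
        · exact div_le_self (by positivity) hss'.lt.le
        · exact div_le_self (by positivity) hss'.symm.lt.le

theorem rpow_le_rpow_add_one {a t p : ℝ} (ha : 0 ≤ a) (ht : 0 ≤ t) (htp : t ≤ p) :
    a ^ t ≤ a ^ p + 1 := by
  rcases le_total a 1 with h | h
  · linarith [rpow_le_one ha h ht, rpow_nonneg ha p]
  · linarith [rpow_le_rpow_of_exponent_le h htp]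

theorem rpow_mul_rpow_le_of_lt_two {a b p q r ε : ℝ} (ha : 0 ≤ a) (hb : 0 ≤ b) (hq : q ≠ 0)
    (hr : 0 < r) (hr2 : r < 2) (hε : 0 < ε) :
    a ^ q * b ^ r ≤
      ε * a ^ p * b ^ (2 : ℝ) + ε ^ (-(r / (2 - r))) * a ^ ((2 * q - r * p) / (2 - r)) := by
  have h2r : 0 < 2 - r := by linarith
  have hconj : (2 / r).HolderConjugate (2 / (2 - r)) := by
    rw [holderConjugate_iff]
    refine ⟨by rw [lt_div_iff₀ hr]; linarith, ?_⟩
    field_simp; ring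
  have hyoung := young_inequality_eps_of_nonneg (x := a ^ (p * r / 2) * b ^ r)
    (y := a ^ (q - p * r / 2)) (by positivity) (by positivity) hconj hε
  have hxy : a ^ (p * r / 2) * b ^ r * a ^ (q - p * r / 2) = a ^ q * b ^ r := by
    rw [mul_right_comm, ← rpow_add' ha (by simpa using hq)]; ring_nf
  have hx : (a ^ (p * r / 2) * b ^ r) ^ (2 / r) = a ^ p * b ^ (2 : ℝ) := by
    rw [mul_rpow (by positivity) (by positivity), ← rpow_mul ha, ← rpow_mul hb]
    congr 2 <;> field_simp
  have hy : (a ^ (q - p * r / 2)) ^ (2 / (2 - r)) = a ^ ((2 * q - r * p) / (2 - r)) := by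
    rw [← rpow_mul ha]; congr 1; field_simp
  have hexp : 2 / (2 - r) / (2 / r) = r / (2 - r) := by field_simp
  rwa [hxy, hx, hy, hexp, ← mul_assoc] at hyoung

end Real

/-- Young-type pointwise interpolation inequality (E:Young), pointwise form. -/
theorem stmt_0 (p q r μ : ℝ) (hq : 0 < q) (hqp : q < p) (hr : 0 < r) (hr2 : r < 2)
    (hrp : r * p < 2 * q) (hμ : 0 < μ) :
    ∃ C : ℝ, 0 < C ∧ ∀ a b : ℝ, 0 ≤ a → 0 ≤ b →
      a ^ q * b ^ r ≤ μ⁻¹ * a ^ p * b ^ (2 : ℝ) + C * (a ^ p + 1) := by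
  have h2r : 0 < 2 - r := by linarith
  have ht : 0 ≤ (2 * q - r * p) / (2 - r) := div_nonneg (by linarith) h2r.le
  have htp : (2 * q - r * p) / (2 - r) ≤ p := by rw [div_le_iff₀ h2r]; nlinarith
  refine ⟨μ⁻¹ ^ (-(r / (2 - r))), by positivity, fun a b ha hb => ?_⟩
  calc a ^ q * b ^ r
      ≤ μ⁻¹ * a ^ p * b ^ (2 : ℝ) + μ⁻¹ ^ (-(r / (2 - r))) * a ^ ((2 * q - r * p) / (2 - r)) :=
        Real.rpow_mul_rpow_le_of_lt_two ha hb hq.ne' hr hr2 (inv_pos.2 hμ)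
    _ ≤ μ⁻¹ * a ^ p * b ^ (2 : ℝ) + μ⁻¹ ^ (-(r / (2 - r))) * (a ^ p + 1) := by
        gcongr; exact Real.rpow_le_rpow_add_one ha ht htp
end

section
/- Let h be a real symmetric 2×2 matrix with trace H = tr(h), and suppose that H ≥ 0 and that h − ε·H·I is positive semidefinite for some ε > 0. Then H·tr(h³) − (tr(h²))² ≥ 2·ε²·H²·( tr(h²) − ½·H² ). -/
/-!
By Cayley–Hamilton, for a 2×2 matrix `h` with trace `H` one has
`H tr(h³) − (tr h²)² = det h · disc h` and `2 tr(h²) − H² = disc h`, where `disc h = H² − 4 det h`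
is the discriminant of the characteristic polynomial. So the inequality says
`(εH)² disc h ≤ det h · disc h`. The discriminant of a real symmetric matrix is
`(a − c)² + 4b² ≥ 0`, and `h ≥ t I` with `t = εH ≥ 0` forces `det h ≥ t²`, since
`det (h − t I) = det h − tH + t² ≥ 0` and `tr (h − t I) = H − 2t ≥ 0`.
-/

namespace Matrix

section CommRing

variable {R : Type*} [CommRing R] (A : Matrix (Fin 2) (Fin 2) R)

theorem trace_sq_fin_two : trace (A ^ 2) = trace A ^ 2 - 2 * det A := by
  simp only [sq, trace_fin_two, det_fin_two, mul_apply, Fin.sum_univ_two]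
  ring

theorem trace_pow_three_fin_two : trace (A ^ 3) = trace A ^ 3 - 3 * trace A * det A := by
  simp only [pow_succ, pow_zero, one_mul, trace_fin_two, det_fin_two, mul_apply,
    Fin.sum_univ_two]
  ring

theorem det_sub_smul_one_fin_two (t : R) : det (A - t • 1) = det A - t * trace A + t ^ 2 := by
  simp only [det_fin_two, trace_fin_two, sub_apply, smul_apply, one_apply_eq, one_apply_ne,
    zero_ne_one, one_ne_zero, ne_eq, not_false_eq_true, smul_eq_mul]
  ring

theorem two_mul_trace_sq_sub_sq_fin_two : 2 * trace (A ^ 2) - trace A ^ 2 = discr A := by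
  rw [discr_fin_two, trace_sq_fin_two]
  ring

theorem trace_mul_trace_pow_three_sub_sq_fin_two :
    trace A * trace (A ^ 3) - trace (A ^ 2) ^ 2 = det A * discr A := by
  rw [discr_fin_two, trace_sq_fin_two, trace_pow_three_fin_two]
  ring

end CommRing

theorem IsSymm.discr_nonneg_fin_two {R : Type*} [CommRing R] [LinearOrder R]
    [IsStrictOrderedRing R] {A : Matrix (Fin 2) (Fin 2) R} (hA : A.IsSymm) : 0 ≤ discr A := by
  have hdiscr : discr A = (A 0 0 - A 1 1) ^ 2 + 4 * A 0 1 ^ 2 := by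
    rw [discr_fin_two, trace_fin_two, det_fin_two, hA.apply 0 1]
    ring
  rw [hdiscr]
  positivity

theorem sq_le_det_of_posSemidef_sub_smul_one {A : Matrix (Fin 2) (Fin 2) ℝ} {t : ℝ} (ht : 0 ≤ t)
    (hA : (A - t • 1).PosSemidef) : t ^ 2 ≤ det A := by
  have hdet : 0 ≤ det A - t * trace A + t ^ 2 := det_sub_smul_one_fin_two A t ▸ hA.det_nonneg
  have htrace : 2 * t ≤ trace A := by
    have := hA.trace_nonneg
    simp only [trace_sub, trace_smul, trace_one, Fintype.card_fin, Nat.cast_ofNat,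
      smul_eq_mul] at this
    linarith
  nlinarith [mul_le_mul_of_nonneg_left htrace ht]

end Matrix

theorem stmt_6_general (h : Matrix (Fin 2) (Fin 2) ℝ)
    (ε : ℝ) (hε : 0 < ε) (H : ℝ) (hH : H = Matrix.trace h) (hH0 : 0 ≤ H)
    (hpinch : (h - (ε * H) • (1 : Matrix (Fin 2) (Fin 2) ℝ)).PosSemidef) :
    2 * ε ^ 2 * H ^ 2 * (Matrix.trace (h ^ 2) - H ^ 2 / 2) ≤
      H * Matrix.trace (h ^ 3) - (Matrix.trace (h ^ 2)) ^ 2 := by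
  have hsymm : h.IsSymm := by
    simpa using (Matrix.isHermitian_iff_isSymm.mp hpinch.isHermitian).add
      (Matrix.isSymm_one.smul (ε * H))
  have hdet : (ε * H) ^ 2 ≤ h.det :=
    Matrix.sq_le_det_of_posSemidef_sub_smul_one (by positivity) hpinch
  calc 2 * ε ^ 2 * H ^ 2 * (Matrix.trace (h ^ 2) - H ^ 2 / 2) = (ε * H) ^ 2 * h.discr := by
        rw [← Matrix.two_mul_trace_sq_sub_sq_fin_two, hH]; ring
    _ ≤ h.det * h.discr := mul_le_mul_of_nonneg_right hdet hsymm.discr_nonneg_fin_two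
    _ = H * Matrix.trace (h ^ 3) - Matrix.trace (h ^ 2) ^ 2 := by
        rw [hH, Matrix.trace_mul_trace_pow_three_sub_sq_fin_two]

/-- Pointwise pinching inequality Z = H·tr(h³) − (tr h²)² ≥ 2ε²H²(tr h² − ½H²)
for a symmetric 2×2 matrix with h ≥ εH·I. -/
theorem stmt_6 (h : Matrix (Fin 2) (Fin 2) ℝ) (hs : h.IsSymm)
    (ε : ℝ) (hε : 0 < ε) (H : ℝ) (hH : H = Matrix.trace h) (hH0 : 0 ≤ H)
    (hpinch : (h - (ε * H) • (1 : Matrix (Fin 2) (Fin 2) ℝ)).PosSemidef) :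
    2 * ε ^ 2 * H ^ 2 * (Matrix.trace (h ^ 2) - H ^ 2 / 2) ≤
      H * Matrix.trace (h ^ 3) - (Matrix.trace (h ^ 2)) ^ 2 :=
  stmt_6_general h ε hε H hH hH0 hpinch
end

section
/- Let h be a real symmetric 2×2 matrix with trace H = tr(h) ≥ 0, and suppose h − ε·H·I is positive semidefinite for some ε > 0. Then for every vector w ∈ ℝ² one has Σ_{i,k,l=1}^{2} ( w_i·h_{kl} − w_k·h_{il} )² ≥ 2·ε²·H²·|w|²; equivalently, |w|²·|h|² − |h·w|² ≥ ε²·H²·|w|², where |h|² = Σ_{i,j} h_{ij}² is the squared Frobenius norm and h·w denotes the matrix–vector product. -/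
/-!
Put `a = ε H ≥ 0`. By Lagrange's identity the sum of squares is `2 (|w|²|h|² - |hw|²)`, and
for a symmetric `2 × 2` matrix `|w|²|h|² - |hw|² = |adj(h) w|²` (in an eigenbasis both sides are
`λ₂² w₁² + λ₁² w₂²`). In dimension two `adj(h - aI) = adj(h) - aI`, and the adjugate of a
positive semidefinite matrix is a rotation conjugate of its transpose, hence positive
semidefinite. So `adj(h) = P + aI` with `P ≥ 0`, and
`|adj(h) w|² = |Pw|² + 2a⟨w, Pw⟩ + a²|w|² ≥ a²|w|²`.
-/

open Matrix Finset

theorem Matrix.sum_sq_wedge_eq {n : Type*} [Fintype n] (A : Matrix n n ℝ) (w : n → ℝ) :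
    ∑ i, ∑ k, ∑ l, (w i * A k l - w k * A i l) ^ 2 =
      2 * ((∑ i, w i ^ 2) * (∑ i, ∑ j, A i j ^ 2) - ∑ l, (w ᵥ* A) l ^ 2) := by
  have hcross : ∑ i, ∑ k, ∑ l, w i * A k l * (w k * A i l) = ∑ l, (w ᵥ* A) l ^ 2 := calc
    _ = ∑ i, ∑ l, ∑ k, w i * A i l * (w k * A k l) := by
        refine sum_congr rfl fun i _ => ?_
        rw [sum_comm]
        exact sum_congr rfl fun l _ => sum_congr rfl fun k _ => by ring
    _ = ∑ l, (w ᵥ* A) l ^ 2 := by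
        rw [sum_comm]; simp only [vecMul, dotProduct, sq, sum_mul_sum]
  have hsq : ∑ i, ∑ k, ∑ l, (w i * A k l) ^ 2 = (∑ i, w i ^ 2) * (∑ i, ∑ j, A i j ^ 2) := by
    simp only [mul_pow, ← mul_sum, sum_mul]
  have hsq' : ∑ i, ∑ k, ∑ l, (w k * A i l) ^ 2 = (∑ i, w i ^ 2) * (∑ i, ∑ j, A i j ^ 2) := by
    rw [sum_comm]; exact hsq
  have hexpand : ∀ i k l, (w i * A k l - w k * A i l) ^ 2 =
      (w i * A k l) ^ 2 + (w k * A i l) ^ 2 - 2 * (w i * A k l * (w k * A i l)) :=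
    fun _ _ _ => by ring
  simp only [hexpand, sum_add_distrib, sum_sub_distrib, ← mul_sum]
  rw [hsq, hsq', hcross]
  ring

theorem Matrix.sq_mul_sum_sq_le_sum_sq_mulVec {n : Type*} [Fintype n] [DecidableEq n]
    {M : Matrix n n ℝ} {a : ℝ} (ha : 0 ≤ a) (hM : (M - a • 1).PosSemidef) (w : n → ℝ) :
    a ^ 2 * ∑ i, w i ^ 2 ≤ ∑ i, (M *ᵥ w) i ^ 2 := by
  set P := M - a • 1
  have hP : 0 ≤ ∑ i, w i * (P *ᵥ w) i := hM.dotProduct_mulVec_nonneg w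
  have hMw : ∀ i, (M *ᵥ w) i = (P *ᵥ w) i + a * w i := fun i => by
    simp [P, sub_mulVec, Matrix.smul_mulVec]
  calc a ^ 2 * ∑ i, w i ^ 2
      ≤ ∑ i, (P *ᵥ w) i ^ 2 + 2 * a * ∑ i, w i * (P *ᵥ w) i + a ^ 2 * ∑ i, w i ^ 2 := by
        have := sum_nonneg fun i (_ : i ∈ univ) => sq_nonneg ((P *ᵥ w) i)
        nlinarith
    _ = ∑ i, (M *ᵥ w) i ^ 2 := by
        simp only [hMw, mul_sum, ← sum_add_distrib]
        exact sum_congr rfl fun i _ => by ring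

theorem Matrix.PosSemidef.adjugate_fin_two {R : Type*} [CommRing R] [PartialOrder R] [StarRing R]
    [StarOrderedRing R] {A : Matrix (Fin 2) (Fin 2) R} (hA : A.PosSemidef) :
    A.adjugate.PosSemidef := by
  have hrot : A.adjugate =
      (!![0, 1; -1, 0] : Matrix (Fin 2) (Fin 2) R)ᴴ * Aᵀ * !![0, 1; -1, 0] := by
    rw [Matrix.adjugate_fin_two]
    ext i j; fin_cases i <;> fin_cases j <;> simp [mul_apply, Fin.sum_univ_two]
  rw [hrot]
  exact hA.transpose.conjTranspose_mul_mul_same _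

theorem Matrix.adjugate_fin_two_sub_smul_one {R : Type*} [CommRing R]
    (A : Matrix (Fin 2) (Fin 2) R) (a : R) :
    (A - a • 1).adjugate = A.adjugate - a • 1 := by
  ext i j; fin_cases i <;> fin_cases j <;> simp [adjugate_fin_two]

theorem Matrix.sum_sq_mulVec_eq_sum_sq_adjugate_mulVec {A : Matrix (Fin 2) (Fin 2) ℝ}
    (hA : A.IsSymm) (w : Fin 2 → ℝ) :
    (∑ i, w i ^ 2) * (∑ i, ∑ j, A i j ^ 2) - ∑ i, (A *ᵥ w) i ^ 2 =
      ∑ i, (A.adjugate *ᵥ w) i ^ 2 := by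
  have hsymm : A 1 0 = A 0 1 := hA.apply 0 1
  simp only [Fin.sum_univ_two, adjugate_fin_two, mulVec, dotProduct, hsymm, of_apply, cons_val',
    cons_val_zero, cons_val_fin_one, cons_val_one, neg_mul]
  ring

theorem stmt_7_general (h : Matrix (Fin 2) (Fin 2) ℝ) (hs : h.IsSymm)
    (ε : ℝ) (hε : 0 < ε) (H : ℝ) (hH0 : 0 ≤ H)
    (hpinch : (h - (ε * H) • (1 : Matrix (Fin 2) (Fin 2) ℝ)).PosSemidef)
    (w : Fin 2 → ℝ) :
    (2 * ε ^ 2 * H ^ 2 * (∑ i, w i ^ 2) ≤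
      ∑ i, ∑ k, ∑ l, (w i * h k l - w k * h i l) ^ 2) ∧
    (ε ^ 2 * H ^ 2 * (∑ i, w i ^ 2) ≤
      (∑ i, w i ^ 2) * (∑ i, ∑ j, h i j ^ 2) - ∑ i, (h.mulVec w i) ^ 2) := by
  have hadj : (h.adjugate - (ε * H) • 1).PosSemidef := by
    rw [← adjugate_fin_two_sub_smul_one]
    exact hpinch.adjugate_fin_two
  have hbound : ε ^ 2 * H ^ 2 * (∑ i, w i ^ 2) ≤
      (∑ i, w i ^ 2) * (∑ i, ∑ j, h i j ^ 2) - ∑ i, (h.mulVec w i) ^ 2 := by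
    rw [sum_sq_mulVec_eq_sum_sq_adjugate_mulVec hs, ← mul_pow]
    exact sq_mul_sum_sq_le_sum_sq_mulVec (by positivity) hadj w
  refine ⟨?_, hbound⟩
  rw [sum_sq_wedge_eq, ← mulVec_transpose, hs.eq]
  linarith

/-- Pointwise squeeze inequality (Lemma 6.6): for a symmetric 2×2 matrix h with
h ≥ εH·I, H = tr h ≥ 0, and any vector w,
Σ (wᵢh_{kl} − w_kh_{il})² ≥ 2ε²H²|w|²; equivalently |w|²|h|² − |hw|² ≥ ε²H²|w|². -/
theorem stmt_7 (h : Matrix (Fin 2) (Fin 2) ℝ) (hs : h.IsSymm)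
    (ε : ℝ) (hε : 0 < ε) (H : ℝ) (hH : H = Matrix.trace h) (hH0 : 0 ≤ H)
    (hpinch : (h - (ε * H) • (1 : Matrix (Fin 2) (Fin 2) ℝ)).PosSemidef)
    (w : Fin 2 → ℝ) :
    (2 * ε ^ 2 * H ^ 2 * (∑ i, w i ^ 2) ≤
      ∑ i, ∑ k, ∑ l, (w i * h k l - w k * h i l) ^ 2) ∧
    (ε ^ 2 * H ^ 2 * (∑ i, w i ^ 2) ≤
      (∑ i, w i ^ 2) * (∑ i, ∑ j, h i j ^ 2) - ∑ i, (h.mulVec w i) ^ 2) :=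
  stmt_7_general h hs ε hε H hH0 hpinch w
end

section
/- Let E be a real inner product space, S ⊆ E a subset, K > 0, and ν : S → E a map with ‖ν(p)‖ = 1 for all p ∈ S. Assume that for all p, q ∈ S with p ≠ q one has 0 ≤ 2·⟨p − q, ν(p)⟩ ≤ K·‖p − q‖². Then for every p ∈ S and every real number t with 0 < |t| < 1/K, the point x = p + t·ν(p) satisfies ‖x − q‖ > |t| for every q ∈ S with q ≠ p; in particular, p is the unique nearest point of S to x, and the distance from x to S equals |t|. -/
/-!
Expanding the square, `‖p + t • ν p - q‖² - t² = ‖p - q‖² + 2t⟪p - q, ν p⟫`. For `t ≥ 0` the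
lower curvature bound makes the inner product term nonnegative; for `t < 0` the upper bound makes it
at least `-|t| K ‖p - q‖²`, which is more than `-‖p - q‖²` because `|t| K < 1`. Either way the
difference is positive, so `p` is the strict nearest point of `S` to `p + t • ν p`.
-/

open Metric

open scoped RealInnerProductSpace

theorem Metric.infDist_eq_dist_of_forall_dist_le {α : Type*} [PseudoMetricSpace α] {s : Set α}
    {x y : α} (hy : y ∈ s) (h : ∀ z ∈ s, dist x y ≤ dist x z) : infDist x s = dist x y :=
  le_antisymm (infDist_le_dist_of_mem hy) ((le_infDist ⟨y, hy⟩).2 h)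

section InnerProductSpace

variable {E : Type*} [NormedAddCommGroup E] [InnerProductSpace ℝ E]

theorem norm_add_smul_sub_sq_of_norm_eq_one {v : E} (hv : ‖v‖ = 1) (p q : E) (t : ℝ) :
    ‖p + t • v - q‖ ^ 2 = ‖p - q‖ ^ 2 + t * (2 * ⟪p - q, v⟫) + t ^ 2 := by
  rw [show p + t • v - q = (p - q) + t • v by abel, norm_add_sq_real, real_inner_smul_right,
    norm_smul, hv, Real.norm_eq_abs, mul_one, sq_abs]
  ring

theorem abs_lt_norm_add_smul_sub {v p q : E} {K t : ℝ} (hv : ‖v‖ = 1) (hpq : p ≠ q)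
    (h_nonneg : 0 ≤ 2 * ⟪p - q, v⟫) (h_le : 2 * ⟪p - q, v⟫ ≤ K * ‖p - q‖ ^ 2)
    (htK : |t| * K < 1) : |t| < ‖p + t • v - q‖ := by
  have hpq_pos : 0 < ‖p - q‖ ^ 2 := by positivity [sub_ne_zero.2 hpq]
  have h_cross : -‖p - q‖ ^ 2 < t * (2 * ⟪p - q, v⟫) := by
    rcases le_or_gt 0 t with ht | ht
    · nlinarith [mul_nonneg ht h_nonneg]
    · have hKt : t * (K * ‖p - q‖ ^ 2) ≤ t * (2 * ⟪p - q, v⟫) :=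
        mul_le_mul_of_nonpos_left h_le ht.le
      rw [abs_of_neg ht] at htK
      nlinarith
  refine abs_lt_of_sq_lt_sq ?_ (norm_nonneg _)
  rw [norm_add_smul_sub_sq_of_norm_eq_one hv]
  linarith

end InnerProductSpace

theorem stmt_8_general {E : Type*} [NormedAddCommGroup E] [InnerProductSpace ℝ E]
    (S : Set E) (K : ℝ) (ν : E → E)
    (hν : ∀ p ∈ S, ‖ν p‖ = 1)
    (hZ : ∀ p ∈ S, ∀ q ∈ S, p ≠ q →
      0 ≤ 2 * (inner ℝ (p - q) (ν p) : ℝ) ∧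
      2 * (inner ℝ (p - q) (ν p) : ℝ) ≤ K * ‖p - q‖ ^ 2)
    (p : E) (hp : p ∈ S) (t : ℝ) (ht : |t| < 1 / K) :
    (∀ q ∈ S, q ≠ p → |t| < ‖(p + t • ν p) - q‖) ∧
    (∀ q ∈ S, dist (p + t • ν p) q = |t| → q = p) ∧
    Metric.infDist (p + t • ν p) S = |t| := by
  have hK : 0 < K := one_div_pos.1 ((abs_nonneg t).trans_lt ht)
  have htK : |t| * K < 1 := (lt_div_iff₀ hK).1 ht
  have hfoot : dist (p + t • ν p) p = |t| := by
    rw [dist_eq_norm, add_sub_cancel_left, norm_smul, hν p hp, Real.norm_eq_abs, mul_one]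
  have hfar : ∀ q ∈ S, q ≠ p → |t| < ‖(p + t • ν p) - q‖ := fun q hq hqp =>
    have ⟨h_nonneg, h_le⟩ := hZ p hp q hq (Ne.symm hqp)
    abs_lt_norm_add_smul_sub (hν p hp) (Ne.symm hqp) h_nonneg h_le htK
  refine ⟨hfar, fun q hq hdist => ?_, ?_⟩
  · by_contra hqp
    exact (hfar q hq hqp).ne' (by rwa [← dist_eq_norm])
  · rw [← hfoot]
    refine infDist_eq_dist_of_forall_dist_le hp fun q hq => ?_
    rcases eq_or_ne q p with rfl | hqp
    · exact le_rfl
    · exact hfoot.trans_le (dist_eq_norm _ q ▸ (hfar q hq hqp).le)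

/-- Unique nearest-point (foot point) property on the tubular neighborhood S_{1/K}
under the two-sided ball curvature bound 0 ≤ Z̲_S ≤ Z̄_S ≤ K. -/
theorem stmt_8 {E : Type*} [NormedAddCommGroup E] [InnerProductSpace ℝ E]
    (S : Set E) (K : ℝ) (hK : 0 < K) (ν : E → E)
    (hν : ∀ p ∈ S, ‖ν p‖ = 1)
    (hZ : ∀ p ∈ S, ∀ q ∈ S, p ≠ q →
      0 ≤ 2 * (inner ℝ (p - q) (ν p) : ℝ) ∧
      2 * (inner ℝ (p - q) (ν p) : ℝ) ≤ K * ‖p - q‖ ^ 2)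
    (p : E) (hp : p ∈ S) (t : ℝ) (ht0 : 0 < |t|) (ht : |t| < 1 / K) :
    (∀ q ∈ S, q ≠ p → |t| < ‖(p + t • ν p) - q‖) ∧
    (∀ q ∈ S, dist (p + t • ν p) q = |t| → q = p) ∧
    Metric.infDist (p + t • ν p) S = |t| :=
  stmt_8_general S K ν hν hZ p hp t ht
end
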